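/- Every vertex of SP_9 is adjacent by a negative edge to at least one vertex of the set {4, 5, 7, 8}, and every vertex of SP_9 other than vertex 0 is adjacent by a positive edge to at least one vertex of {4, 5, 7, 8}. -/

import Mathlib

/-- Vertices of `SP_9`, identified with `{0,1,2} × {0,1,2}`. -/
abbrev V9 : Type := Fin 3 × Fin 3

/-- The edge `uv` of `SP_9` is positive: `u ≠ v` and they agree in exactly one coordinate. -/
abbrev pos9 (u v : V9) : Prop :=
  (u.1 = v.1 ∧ u.2 ≠ v.2) ∨ (u.1 ≠ v.1 ∧ u.2 = v.2)

/-- The edge `uv` of `SP_9` is negative: `u ≠ v` and it is not positive. -/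
abbrev neg9 (u v : V9) : Prop := u ≠ v ∧ ¬ pos9 u v

/-- The identification of the labels `{0,…,8}` with `{0,1,2} × {0,1,2}`,
`i ↦ (i div 3, i mod 3)`. -/
def vnum (n : Fin 9) : V9 := (⟨n.val / 3, by omega⟩, ⟨n.val % 3, by omega⟩)

theorem sp9_dominating_4578 :
    ∀ v : V9,
      (∃ u ∈ ({4, 5, 7, 8} : Finset (Fin 9)), neg9 v (vnum u)) ∧
      (v ≠ vnum 0 → ∃ u ∈ ({4, 5, 7, 8} : Finset (Fin 9)), pos9 v (vnum u)) := by
  -- The labels 4, 5, 7, 8 are the points of {1,2} × {1,2}, and {1,2} contains a value different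
  -- from any given coordinate; only (0,0) has no coordinate in {1,2} to share.
  decide
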